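/- Let p ∈ (0,1), x ∈ ℤ, and x̃ = x + η with η discrete Laplace with parameter p. For any f : ℤ → ℝ with finite E[(f(x̃) - f(x))²] and any ξ ∈ {-1, +1}, we have E[(f(x̃ + ξ) - f(x))²] ≤ (1/p)·E[(f(x̃) - f(x))²]. -/
import Mathlib


/-- Shifted evaluation MSE bound: `E[(f(x̃+ξ) - f(x))²] ≤ (1/p) E[(f(x̃) - f(x))²]`
for `ξ ∈ {-1, +1}`. -/
theorem discrete_laplace_shifted_mse_bound
    (p : ℝ) (hp0 : 0 < p) (hp1 : p < 1) (x : ℤ) (f : ℤ → ℝ)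
    (ξ : ℤ) (hξ : ξ = -1 ∨ ξ = 1)
    (hsum : Summable fun i : ℤ =>
      (1 - p) / (1 + p) * p ^ |i| * (f (x + i) - f x) ^ 2) :
    (Summable fun i : ℤ =>
        (1 - p) / (1 + p) * p ^ |i| * (f (x + i + ξ) - f x) ^ 2) ∧
      (∑' i : ℤ, (1 - p) / (1 + p) * p ^ |i| * (f (x + i + ξ) - f x) ^ 2) ≤
        1 / p * ∑' i : ℤ, (1 - p) / (1 + p) * p ^ |i| * (f (x + i) - f x) ^ 2 := by
  set c : ℝ := (1 - p) / (1 + p) with hc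
  have hcpos : 0 ≤ c := div_nonneg (by linarith) (by linarith)
  set F : ℤ → ℝ := fun i => c * p ^ |i| * (f (x + i) - f x) ^ 2 with hF
  have hFnn : ∀ i, 0 ≤ F i := fun i =>
    mul_nonneg (mul_nonneg hcpos (zpow_nonneg hp0.le _)) (sq_nonneg _)
  have hanti : Antitone fun n : ℤ => p ^ n := (zpow_right_strictAnti₀ hp0 hp1).antitone
  have hξabs : |ξ| = 1 := by rcases hξ with h | h <;> simp [h]
  have hsum' : Summable fun i : ℤ => F (i + ξ) :=
    hsum.comp_injective (add_left_injective ξ)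
  have hteq : (∑' i : ℤ, F (i + ξ)) = ∑' i : ℤ, F i :=
    (Equiv.addRight ξ).tsum_eq F
  have key : ∀ i : ℤ, c * p ^ |i| * (f (x + i + ξ) - f x) ^ 2 ≤ (1 / p) * F (i + ξ) := by
    intro i
    have habs : |i + ξ| ≤ |i| + 1 := by
      calc |i + ξ| ≤ |i| + |ξ| := abs_add_le _ _
        _ = |i| + 1 := by rw [hξabs]
    have hpow : p ^ (|i| + 1) ≤ p ^ |i + ξ| := hanti habs
    have hpow' : p ^ |i| ≤ (1 / p) * p ^ |i + ξ| := by
      rw [zpow_add_one₀ hp0.ne'] at hpow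
      have := mul_le_mul_of_nonneg_left hpow (le_of_lt (by positivity : (0:ℝ) < 1 / p))
      calc p ^ |i| = (1 / p) * (p ^ |i| * p) := by field_simp
        _ ≤ (1 / p) * p ^ |i + ξ| := this
    have hx' : x + i + ξ = x + (i + ξ) := by ring
    rw [hF]
    simp only [hx']
    calc c * p ^ |i| * (f (x + (i + ξ)) - f x) ^ 2
        ≤ c * ((1 / p) * p ^ |i + ξ|) * (f (x + (i + ξ)) - f x) ^ 2 := by
          apply mul_le_mul_of_nonneg_right _ (sq_nonneg _)
          exact mul_le_mul_of_nonneg_left hpow' hcpos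
      _ = (1 / p) * (c * p ^ |i + ξ| * (f (x + (i + ξ)) - f x) ^ 2) := by ring
  have hsumL : Summable fun i : ℤ => c * p ^ |i| * (f (x + i + ξ) - f x) ^ 2 := by
    apply Summable.of_nonneg_of_le
      (fun i => mul_nonneg (mul_nonneg hcpos (zpow_nonneg hp0.le _)) (sq_nonneg _)) key
    exact hsum'.mul_left _
  refine ⟨hsumL, ?_⟩
  calc (∑' i : ℤ, c * p ^ |i| * (f (x + i + ξ) - f x) ^ 2)
      ≤ ∑' i : ℤ, (1 / p) * F (i + ξ) := Summable.tsum_le_tsum key hsumL (hsum'.mul_left _)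
    _ = (1 / p) * ∑' i : ℤ, F (i + ξ) := tsum_mul_left
    _ = (1 / p) * ∑' i : ℤ, F i := by rw [hteq]
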